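/- Any two reducers of the same canonical tree H are comparable for inclusion: if G₁ and G₂ are both reducers of H, then G₁ ⊆ G₂ or G₂ ⊆ G₁ (as sets of options); moreover, if G₁ is strictly included in G₂, then G₁ is itself a reducer of G₂. -/

import Mathlib

/-- An impartial game: a position is given by the list of its options
(the positions reachable in one move); both players have the same moves. -/
inductive Game : Type
  | node : List Game → Game

namespace Game

/-- The options of a position. -/
def options : Game → List Game
  | node l => l

/-- Disjunctive sum of two games: a move is made in exactly one component. -/
def add : Game → Game → Game
  | node l, node r =>
      node ((l.attach.map fun x => add x.1 (node r)) ++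
            (r.attach.map fun y => add (node l) y.1))
termination_by g h => sizeOf g + sizeOf h
decreasing_by
  · have := List.sizeOf_lt_of_mem x.2; simp_wf; (try simp only [Game.node.sizeOf_spec] at *); omega
  · have := List.sizeOf_lt_of_mem y.2; simp_wf; (try simp only [Game.node.sizeOf_spec] at *); omega

/-- Misère win (for the player to move): the game has no options,
or some option is a misère loss. -/
def MisereWin : Game → Prop
  | node l => l = [] ∨ ∃ x : {a // a ∈ l}, ¬ MisereWin x.1
decreasing_by
  simp_wf; have := List.sizeOf_lt_of_mem x.2; omega

/-- Misère indistinguishability: adding any game `T` yields the same misère outcome. -/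
def Indist (G H : Game) : Prop :=
  ∀ T : Game, MisereWin (add G T) ↔ MisereWin (add H T)

/-- The Nim-heap of size `n`, whose options are `nim 0, …, nim (n-1)`. -/
def nim : ℕ → Game
  | 0 => node []
  | n + 1 => node ((nim n).options ++ [nim n])

/-- Normal-play win (for the player to move): some option is a normal-play loss.
A player unable to move loses. -/
def NormalWin : Game → Prop
  | node l => ∃ x : {a // a ∈ l}, ¬ NormalWin x.1
decreasing_by
  simp_wf; have := List.sizeOf_lt_of_mem x.2; omega

/-- The Grundy value: the mex of the Grundy values of the options. -/
noncomputable def grundy : Game → ℕ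
  | node l => sInf {n : ℕ | ∀ x : {a // a ∈ l}, grundy x.1 ≠ n}
decreasing_by
  simp_wf; have := List.sizeOf_lt_of_mem x.2; omega

/-- The height of a game: the maximal number of moves in a play from it. -/
def height : Game → ℕ
  | node l => (l.attach.map fun x => height x.1 + 1).foldr max 0
decreasing_by
  simp_wf; have := List.sizeOf_lt_of_mem x.2; omega

/-- A canonical tree: duplicate options are removed, hereditarily. -/
def Canonical : Game → Prop
  | node l => l.Nodup ∧ ∀ x : {a // a ∈ l}, Canonical x.1
decreasing_by
  simp_wf; have := List.sizeOf_lt_of_mem x.2; omega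

/-- Extensional (set-theoretic) equality of game trees. -/
def ExtEq : Game → Game → Prop
  | node l, node r =>
      (∀ x : {a // a ∈ l}, ∃ y : {b // b ∈ r}, ExtEq x.1 y.1) ∧
      (∀ y : {b // b ∈ r}, ∃ x : {a // a ∈ l}, ExtEq x.1 y.1)
termination_by g _ => sizeOf g
decreasing_by
  · have := List.sizeOf_lt_of_mem x.2; simp_wf; (try simp only [Game.node.sizeOf_spec] at *); omega
  · have := List.sizeOf_lt_of_mem x.2; simp_wf; (try simp only [Game.node.sizeOf_spec] at *); omega

/-- The disjunctive sum of `n` copies of a game. -/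
def copies : ℕ → Game → Game
  | 0, _ => node []
  | n + 1, g => add g (copies n g)

/-- `G` is a reducer of `H` if `H` is obtained from `G` by adding reversible
moves `R₁, R₂, …`: the options of `H` are those of `G` together with the `Rⱼ`,
each `Rⱼ` having `G` among its options; when `G` is empty one additionally
requires `H` to be a misère win. -/
def Reducer (G H : Game) : Prop :=
  ∃ Rs : List Game,
    (∀ x, x ∈ H.options ↔ x ∈ G.options ∨ x ∈ Rs) ∧
    (∀ R ∈ Rs, G ∈ R.options) ∧
    (G.options = [] → MisereWin H)

/-- A canonical tree is reduced if its only reducer is itself (as a set of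
options) and all of its options are reduced. -/
def Reduced : Game → Prop
  | node l =>
      (∀ G, Reducer G (node l) → ∀ x, x ∈ G.options ↔ x ∈ l) ∧
      ∀ x : {a // a ∈ l}, Reduced x.1
decreasing_by
  simp_wf; have := List.sizeOf_lt_of_mem x.2; omega

end Game

/-!
Two reducers `G₁ ⊆ H`, `G₂ ⊆ H` cannot be incomparable: an option `x ∈ G₁ \ G₂` of `H` is a reversible
move of `G₂`, so `G₂ ∈ x`, and symmetrically `G₁ ∈ y` for `y ∈ G₂ \ G₁`; then
`height G₁ > height x > height G₂ > height y > height G₁`. If `G₁ ⊊ G₂`, the options in `G₂ \ G₁` are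
reversible moves of `G₁` in `H`, hence reversible moves of `G₁` in `G₂`. When `G₁` is empty, `G₂` is a
misère win because the misère loss reached from `H` either is an option of `G₂` or has `G₂` as an option.
-/

namespace Game

theorem height_lt_of_mem_options {x G : Game} (h : x ∈ G.options) : height x < height G := by
  cases G with
  | node l =>
    rw [height]
    exact List.le_max_of_le' (l := l.attach.map fun y => height y.1 + 1) 0
      (List.mem_map.mpr ⟨⟨x, h⟩, List.mem_attach _ _, rfl⟩) le_rfl

theorem misereWin_iff {G : Game} :
    MisereWin G ↔ G.options = [] ∨ ∃ x ∈ G.options, ¬ MisereWin x := by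
  cases G with
  | node l => rw [MisereWin]; simp [options]

theorem misereWin_of_mem_options {G W : Game} (hW : ¬ MisereWin W) (h : G ∈ W.options) :
    MisereWin G := by
  by_contra hG
  exact hW (misereWin_iff.mpr (Or.inr ⟨G, h, hG⟩))

namespace Reducer

variable {G H : Game}

theorem mem_options (h : Reducer G H) {x : Game} (hx : x ∈ G.options) : x ∈ H.options :=
  let ⟨_, hmem, _⟩ := h
  (hmem x).mpr (Or.inl hx)

theorem mem_options_of_not_mem (h : Reducer G H) {x : Game} (hx : x ∈ H.options)
    (hxG : x ∉ G.options) : G ∈ x.options :=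
  let ⟨_, hmem, hrev, _⟩ := h
  hrev x (((hmem x).mp hx).resolve_left hxG)

theorem misereWin_of_options_eq_nil (h : Reducer G H) (hG : G.options = []) : MisereWin H :=
  let ⟨_, _, _, hwin⟩ := h
  hwin hG

theorem misereWin (h : Reducer G H) (hH : MisereWin H) (hG : G.options ≠ []) : MisereWin G := by
  obtain ⟨x, hx⟩ := List.exists_mem_of_ne_nil _ hG
  obtain ⟨W, hW, hWloss⟩ :=
    (misereWin_iff.mp hH).resolve_left (List.ne_nil_of_mem (h.mem_options hx))
  by_cases hWG : W ∈ G.options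
  · exact misereWin_iff.mpr (Or.inr ⟨W, hWG, hWloss⟩)
  · exact misereWin_of_mem_options hWloss (h.mem_options_of_not_mem hW hWG)

theorem subset_or_subset {G₁ G₂ : Game} (h₁ : Reducer G₁ H) (h₂ : Reducer G₂ H) :
    G₁.options ⊆ G₂.options ∨ G₂.options ⊆ G₁.options := by
  by_contra! hc
  simp only [List.subset_def, not_forall] at hc
  obtain ⟨⟨x, hx₁, hx₂⟩, y, hy₂, hy₁⟩ := hc
  have := height_lt_of_mem_options hx₁
  have := height_lt_of_mem_options (h₂.mem_options_of_not_mem (h₁.mem_options hx₁) hx₂)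
  have := height_lt_of_mem_options hy₂
  have := height_lt_of_mem_options (h₁.mem_options_of_not_mem (h₂.mem_options hy₂) hy₁)
  omega

theorem of_ssubset {G₁ G₂ : Game} (h₁ : Reducer G₁ H) (h₂ : Reducer G₂ H)
    (hsub : G₁.options ⊆ G₂.options) (hnsub : ¬ G₂.options ⊆ G₁.options) : Reducer G₁ G₂ := by
  classical
  refine ⟨G₂.options.filter (· ∉ G₁.options), fun x => ?_, fun R hR => ?_, fun hG₁ => ?_⟩
  · by_cases hx : x ∈ G₁.options
    · simp [hx, hsub hx]
    · simp [hx]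
  · obtain ⟨hR₂, hR₁⟩ := List.mem_filter.mp hR
    exact h₁.mem_options_of_not_mem (h₂.mem_options hR₂) (of_decide_eq_true hR₁)
  · exact h₂.misereWin (h₁.misereWin_of_options_eq_nil hG₁) fun h => hnsub (h ▸ List.nil_subset _)

end Reducer

end Game

open Game in
theorem stmt8_general (H G₁ G₂ : Game)
    (h1 : Reducer G₁ H) (h2 : Reducer G₂ H) :
    ((∀ x ∈ G₁.options, x ∈ G₂.options) ∨ (∀ x ∈ G₂.options, x ∈ G₁.options)) ∧
    (((∀ x ∈ G₁.options, x ∈ G₂.options) ∧ ¬ (∀ x ∈ G₂.options, x ∈ G₁.options)) →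
      Reducer G₁ G₂) :=
  ⟨(h1.subset_or_subset h2).imp (fun h _ hx => h hx) (fun h _ hx => h hx),
    fun ⟨hsub, hnsub⟩ => h1.of_ssubset h2 (fun {_} hx => hsub _ hx) fun h => hnsub fun _ hx => h hx⟩

open Game in
/-- Any two reducers of the same canonical tree `H` are
comparable for inclusion (as sets of options); moreover if one is strictly
included in the other, then the smaller is a reducer of the bigger. -/
theorem stmt8 (H G₁ G₂ : Game) (hH : Canonical H)
    (hG₁ : Canonical G₁) (hG₂ : Canonical G₂)
    (h1 : Reducer G₁ H) (h2 : Reducer G₂ H) :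
    ((∀ x ∈ G₁.options, x ∈ G₂.options) ∨ (∀ x ∈ G₂.options, x ∈ G₁.options)) ∧
    (((∀ x ∈ G₁.options, x ∈ G₂.options) ∧ ¬ (∀ x ∈ G₂.options, x ∈ G₁.options)) →
      Reducer G₁ G₂) :=
  stmt8_general H G₁ G₂ h1 h2
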